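/- (Theorem 2, sufficient condition, Ψ⁻ branch) Let B be a real n×m matrix, C a real m×n matrix, and let 𝒟 = {Δ ∈ ℝ^m : Δⱼ⁻ ≤ Δⱼ ≤ Δⱼ⁺ for all j} with 0 ≤ Δⱼ⁻ ≤ Δⱼ⁺. Let J₂, J₄ be real symmetric n×n matrices with J₄ negative semidefinite and J₂ + κ̄² J₄ negative definite for some κ̄ > 0. Write J(Δ,κ) = B·diag(Δ)·C + κ² J₂ + κ⁴ J₄. Assume that for every Δ ∈ 𝒟, the characteristic polynomial of B·diag(Δ)·C has 0 as a root of multiplicity exactly one and all its other complex roots have negative real part. If there exists κ̂ > 0 such that det(−J(Δ,κ)) > 0 for all κ ∈ (0, κ̂) and all Δ ∈ 𝒟 (Ψ⁻ initially positive), and there exist κ* > 0 and Δ* ∈ 𝒟 with det(−J(Δ*,κ*)) < 0 (Ψ⁻ has a negative sign change), then there exists Δ ∈ 𝒟 exhibiting microphase separation. -/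

import Mathlib

open Matrix Polynomial

/-- The combined Jacobian `J(Δ,κ) = B ⬝ diag(Δ) ⬝ C + κ² J₂ + κ⁴ J₄`. -/
noncomputable def Jmat {n m : ℕ} (B : Matrix (Fin n) (Fin m) ℝ) (C : Matrix (Fin m) (Fin n) ℝ)
    (J2 J4 : Matrix (Fin n) (Fin n) ℝ) (Δ : Fin m → ℝ) (κ : ℝ) : Matrix (Fin n) (Fin n) ℝ :=
  B * Matrix.diagonal Δ * C + κ ^ 2 • J2 + κ ^ 4 • J4

/-- Every eigenvalue of the real matrix `M` (root in `ℂ` of its characteristic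
polynomial) has negative real part. -/
def AllEigNegRe {n : ℕ} (M : Matrix (Fin n) (Fin n) ℝ) : Prop :=
  ∀ μ : ℂ, ((M.charpoly).map (algebraMap ℝ ℂ)).IsRoot μ → μ.re < 0

/-- Some eigenvalue of the real matrix `M` has positive real part. -/
def SomeEigPosRe {n : ℕ} (M : Matrix (Fin n) (Fin n) ℝ) : Prop :=
  ∃ μ : ℂ, ((M.charpoly).map (algebraMap ℝ ℂ)).IsRoot μ ∧ 0 < μ.re

/-- The parameter `Δ` exhibits microphase separation: there exist
`0 < κ̂ < κ₁ < κ₂` such that all eigenvalues of `J(Δ,κ)` have negative real part for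
`κ ∈ (0,κ̂)`, some eigenvalue of `J(Δ,κ₁)` has positive real part, and all eigenvalues
of `J(Δ,κ₂)` have negative real part. -/
def Microphase {n m : ℕ} (B : Matrix (Fin n) (Fin m) ℝ) (C : Matrix (Fin m) (Fin n) ℝ)
    (J2 J4 : Matrix (Fin n) (Fin n) ℝ) (Δ : Fin m → ℝ) : Prop :=
  ∃ κhat κ1 κ2 : ℝ, 0 < κhat ∧ κhat < κ1 ∧ κ1 < κ2 ∧
    (∀ κ : ℝ, 0 < κ → κ < κhat → AllEigNegRe (Jmat B C J2 J4 Δ κ)) ∧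
    SomeEigPosRe (Jmat B C J2 J4 Δ κ1) ∧
    AllEigNegRe (Jmat B C J2 J4 Δ κ2)

/-!
Take `Δ = Δ*`. At `κ = κ*` the monic characteristic polynomial of `J` is negative at `0`, so it
has a positive real root. For large `κ` the quadratic form of `J` is dominated by
`κ² xᵀ(J₂ + κ̄²J₄)x ≤ -c κ² ‖x‖²`, so it is negative definite and every eigenvalue has negative
real part. For small `κ > 0` the characteristic polynomial `p_κ` is a perturbation of that of
`B diag(Δ*) C`, whose only root in the closed right half-plane is the simple root `0`. The roots
of `p_κ` stay bounded (Cauchy's bound) and, for `κ` near `0`, avoid any compact set on which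
`p_0` has no root, so a root with nonnegative real part must lie near `0`. There the divided difference
`(p_κ(x) - p_κ(y)) / (x - y)` has positive real part, being close to `p_0'(0) > 0`: a non-real
root `z` is excluded by comparing it with the root `conj z`, and a real root `z` satisfies
`-p_κ(0) = (positive) * z`, while `p_κ(0) = det(-J) > 0` by assumption.
-/

open Filter Topology ComplexConjugate

namespace Polynomial

theorem Monic.exists_pos_isRoot_of_eval_zero_neg {p : ℝ[X]} (hp : p.Monic) (h0 : p.eval 0 < 0) :
    ∃ t, 0 < t ∧ p.IsRoot t := by
  have hdeg : 0 < p.degree := by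
    by_contra! h
    rw [hp.natDegree_eq_zero.1 (natDegree_eq_zero_iff_degree_le_zero.2 h)] at h0
    norm_num at h0
  obtain ⟨x, hx⟩ := ((tendsto_atTop_of_leadingCoeff_nonneg p hdeg
    (by rw [hp.leadingCoeff]; exact zero_le_one)).eventually_ge_atTop 0).exists_forall_of_atTop
  obtain ⟨t, ht, hroot⟩ := intermediate_value_Icc (le_max_right x 0) p.continuous.continuousOn
    ⟨h0.le, hx _ (le_max_left x 0)⟩
  exact ⟨t, ht.1.lt_of_ne (by rintro rfl; exact h0.ne hroot), hroot⟩

theorem Monic.eval_derivative_zero_pos {p : ℝ[X]} (hp : p.Monic)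
    (hmult : (p.map (algebraMap ℝ ℂ)).rootMultiplicity 0 = 1)
    (hroots : ∀ z : ℂ, (p.map (algebraMap ℝ ℂ)).IsRoot z → z ≠ 0 → z.re < 0) :
    0 < p.derivative.eval 0 := by
  obtain ⟨q, hpq, hq⟩ := p.exists_eq_pow_rootMultiplicity_mul_and_not_dvd hp.ne_zero 0
  rw [eq_rootMultiplicity_map (algebraMap ℝ ℂ).injective, map_zero (algebraMap ℝ ℂ), hmult,
    C_0, sub_zero, pow_one] at hpq
  rw [dvd_iff_isRoot] at hq
  have hderiv : p.derivative.eval 0 = q.eval 0 := by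
    simp [hpq, derivative_mul]
  rw [hderiv]
  refine (lt_or_gt_of_ne hq).resolve_left fun hneg => ?_
  obtain ⟨t, ht, hqt⟩ :=
    (monic_X.of_mul_monic_left (hpq ▸ hp)).exists_pos_isRoot_of_eval_zero_neg hneg
  have hpt : (p.map (algebraMap ℝ ℂ)).IsRoot (t : ℂ) :=
    IsRoot.map (by simp [IsRoot, hpq, hqt.eq_zero])
  exact (hroots t hpt (by exact_mod_cast ht.ne')).not_ge (by simpa using ht.le)

section DivDiff

variable {R : Type*} [CommRing R]

noncomputable def divDiff (p : R[X]) (x y : R) : R :=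
  p.sum fun k a => a * ∑ i ∈ Finset.range k, x ^ i * y ^ (k - 1 - i)

theorem eval_sub_eval_eq_divDiff_mul (p : R[X]) (x y : R) :
    p.eval x - p.eval y = p.divDiff x y * (x - y) := by
  simp only [eval_eq_sum, divDiff, Polynomial.sum, ← Finset.sum_sub_distrib, Finset.sum_mul]
  exact Finset.sum_congr rfl fun k _ => by rw [mul_assoc, geom_sum₂_mul, mul_sub]

theorem divDiff_self (p : R[X]) (x : R) : p.divDiff x x = p.derivative.eval x := by
  simp only [divDiff, geom_sum₂_self, derivative_eval, mul_assoc]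

theorem divDiff_eq_sum_range {p : R[X]} {N : ℕ} (hp : p.natDegree < N) (x y : R) :
    p.divDiff x y =
      ∑ k ∈ Finset.range N, p.coeff k * ∑ i ∈ Finset.range k, x ^ i * y ^ (k - 1 - i) :=
  p.sum_over_range' (f := fun k a => a * ∑ i ∈ Finset.range k, x ^ i * y ^ (k - 1 - i))
    (fun _ => zero_mul _) N hp

end DivDiff

theorem re_neg_of_isRoot_of_re_divDiff_pos {q : ℝ[X]} (hq : 0 < q.eval 0) {z : ℂ}
    (hz : (q.map (algebraMap ℝ ℂ)).IsRoot z)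
    (hzero : 0 < ((q.map (algebraMap ℝ ℂ)).divDiff z 0).re)
    (hconj : 0 < ((q.map (algebraMap ℝ ℂ)).divDiff z (conj z)).re) : z.re < 0 := by
  by_cases him : z.im = 0
  · have h := congrArg Complex.re (eval_sub_eval_eq_divDiff_mul (q.map (algebraMap ℝ ℂ)) z 0)
    rw [hz.eq_zero, eval_zero_map, sub_zero, Complex.mul_re, him, mul_zero, sub_zero] at h
    simp only [zero_sub, Complex.neg_re, Complex.coe_algebraMap, Complex.ofReal_re] at h
    nlinarith
  · have hconj_root : (q.map (algebraMap ℝ ℂ)).IsRoot (conj z) := by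
      rw [IsRoot, eval_map_algebraMap, aeval_conj, ← eval_map_algebraMap, hz.eq_zero, map_zero]
    have hne : z - conj z ≠ 0 := sub_ne_zero.2 fun h => him (Complex.conj_eq_iff_im.1 h.symm)
    have h := eval_sub_eval_eq_divDiff_mul (q.map (algebraMap ℝ ℂ)) z (conj z)
    rw [hz.eq_zero, hconj_root.eq_zero, sub_zero, eq_comm, mul_eq_zero] at h
    rw [h.resolve_right hne, Complex.zero_re] at hconj
    exact (lt_irrefl 0 hconj).elim

section ContinuousFamily

variable {T : Type*} [TopologicalSpace T] {p : T → ℝ[X]} {n : ℕ}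

theorem continuous_eval_map (hdeg : ∀ t, (p t).natDegree ≤ n)
    (hcont : ∀ k, Continuous fun t => (p t).coeff k) :
    Continuous fun q : T × ℂ => ((p q.1).map (algebraMap ℝ ℂ)).eval q.2 := by
  have hc (k : ℕ) : Continuous fun t => algebraMap ℝ ℂ ((p t).coeff k) :=
    Complex.continuous_ofReal.comp (hcont k)
  simp only [eval_eq_sum_range' (Nat.lt_succ_of_le (natDegree_map_le.trans (hdeg _))),
    coeff_map]
  exact continuous_finsetSum _ fun k _ => ((hc k).comp continuous_fst).mul (by fun_prop)

theorem continuous_divDiff_map (hdeg : ∀ t, (p t).natDegree ≤ n)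
    (hcont : ∀ k, Continuous fun t => (p t).coeff k) :
    Continuous fun q : T × ℂ × ℂ => ((p q.1).map (algebraMap ℝ ℂ)).divDiff q.2.1 q.2.2 := by
  have hc (k : ℕ) : Continuous fun t => algebraMap ℝ ℂ ((p t).coeff k) :=
    Complex.continuous_ofReal.comp (hcont k)
  simp only [divDiff_eq_sum_range (Nat.lt_succ_of_le (natDegree_map_le.trans (hdeg _))),
    coeff_map]
  exact continuous_finsetSum _ fun k _ => ((hc k).comp continuous_fst).mul (by fun_prop)

theorem exists_eventually_norm_le_of_isRoot (t₀ : T) (hmonic : ∀ t, (p t).Monic)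
    (hdeg : ∀ t, (p t).natDegree ≤ n) (hcont : ∀ k, Continuous fun t => (p t).coeff k) :
    ∃ r : ℝ, ∀ᶠ t in 𝓝 t₀, ∀ z : ℂ, ((p t).map (algebraMap ℝ ℂ)).IsRoot z → ‖z‖ ≤ r := by
  set M := ∑ k ∈ Finset.range n, (‖(p t₀).coeff k‖ + 1)
  refine ⟨M + 1, ?_⟩
  have hbdd : ∀ᶠ t in 𝓝 t₀, ∀ k ∈ Finset.range n, ‖(p t).coeff k‖ < ‖(p t₀).coeff k‖ + 1 :=
    (eventually_all_finset _).2 fun k _ =>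
      (hcont k).norm.continuousAt.eventually_lt continuousAt_const (lt_add_one _)
  filter_upwards [hbdd] with t ht z hz
  have hmap : ((p t).map (algebraMap ℝ ℂ)).Monic := (hmonic t).map _
  have hsup : (Finset.range ((p t).map (algebraMap ℝ ℂ)).natDegree).sup
      (‖((p t).map (algebraMap ℝ ℂ)).coeff ·‖₊) ≤ M.toNNReal := by
    refine Finset.sup_le fun k hk => ?_
    have hk : k ∈ Finset.range n :=
      Finset.mem_range.2 ((Finset.mem_range.1 hk).trans_le (natDegree_map_le.trans (hdeg t)))
    rw [← NNReal.coe_le_coe, Real.coe_toNNReal _ (by positivity), coe_nnnorm, coeff_map,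
      Complex.coe_algebraMap, Complex.norm_real]
    exact (ht k hk).le.trans (Finset.single_le_sum (f := fun j => ‖(p t₀).coeff j‖ + 1)
      (fun j _ => by positivity) hk)
  have hbound := hz.norm_lt_cauchyBound hmap.ne_zero
  rw [cauchyBound, hmap.leadingCoeff, nnnorm_one, div_one] at hbound
  have hlt := hbound.trans_le (add_le_add_left hsup 1)
  rw [← NNReal.coe_lt_coe, coe_nnnorm, NNReal.coe_add, Real.coe_toNNReal _ (by positivity),
    NNReal.coe_one] at hlt
  exact hlt.le

theorem eventually_forall_not_isRoot {t₀ : T} {K : Set ℂ} (hK : IsCompact K)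
    (hdeg : ∀ t, (p t).natDegree ≤ n) (hcont : ∀ k, Continuous fun t => (p t).coeff k)
    (hK₀ : ∀ z ∈ K, ¬((p t₀).map (algebraMap ℝ ℂ)).IsRoot z) :
    ∀ᶠ t in 𝓝 t₀, ∀ z ∈ K, ¬((p t).map (algebraMap ℝ ℂ)).IsRoot z :=
  hK.eventually_forall_of_forall_eventually fun z hz =>
    (continuous_eval_map hdeg hcont).continuousAt.eventually_ne (hK₀ z hz)

theorem exists_eventually_re_divDiff_pos {t₀ : T} (hdeg : ∀ t, (p t).natDegree ≤ n)
    (hcont : ∀ k, Continuous fun t => (p t).coeff k) (hderiv : 0 < (p t₀).derivative.eval 0) :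
    ∃ δ > 0, ∀ᶠ t in 𝓝 t₀, ∀ x y : ℂ, ‖x‖ < δ → ‖y‖ < δ →
      0 < (((p t).map (algebraMap ℝ ℂ)).divDiff x y).re := by
  have hmem : {q : T × ℂ × ℂ | 0 < (((p q.1).map (algebraMap ℝ ℂ)).divDiff q.2.1 q.2.2).re}
      ∈ 𝓝 (t₀, 0, 0) :=
    (isOpen_lt continuous_const
      (Complex.continuous_re.comp (continuous_divDiff_map hdeg hcont))).mem_nhds
      (by simpa [divDiff_self, derivative_map, eval_zero_map, -eval_map_algebraMap] using hderiv)
  rw [nhds_prod_eq] at hmem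
  obtain ⟨u, hu, v, hv, huv⟩ := mem_prod_iff.1 hmem
  obtain ⟨δ, hδ, hball⟩ := Metric.mem_nhds_iff.1 hv
  refine ⟨δ, hδ, eventually_of_mem hu fun t ht x y hx hy =>
    huv (show (t, x, y) ∈ u ×ˢ v from ⟨ht, hball ?_⟩)⟩
  rw [← ball_prod_same]
  exact ⟨mem_ball_zero_iff.2 hx, mem_ball_zero_iff.2 hy⟩

theorem eventually_forall_isRoot_re_neg {t₀ : T} (hmonic : ∀ t, (p t).Monic)
    (hdeg : ∀ t, (p t).natDegree ≤ n) (hcont : ∀ k, Continuous fun t => (p t).coeff k)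
    (hroots : ∀ z : ℂ, ((p t₀).map (algebraMap ℝ ℂ)).IsRoot z → z ≠ 0 → z.re < 0)
    (hderiv : 0 < (p t₀).derivative.eval 0) :
    ∀ᶠ t in 𝓝 t₀, 0 < (p t).eval 0 →
      ∀ z : ℂ, ((p t).map (algebraMap ℝ ℂ)).IsRoot z → z.re < 0 := by
  obtain ⟨δ, hδ, hnear⟩ := exists_eventually_re_divDiff_pos hdeg hcont hderiv
  obtain ⟨r, hr⟩ := exists_eventually_norm_le_of_isRoot t₀ hmonic hdeg hcont
  have hK : IsCompact (Metric.closedBall 0 r ∩ {z : ℂ | δ ≤ ‖z‖ ∧ 0 ≤ z.re}) :=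
    (isCompact_closedBall 0 r).inter_right <|
      (isClosed_le continuous_const continuous_norm).inter
        (isClosed_le continuous_const Complex.continuous_re)
  have hfar := eventually_forall_not_isRoot hK hdeg hcont fun z hz hroot =>
    (hroots z hroot (norm_pos_iff.1 (hδ.trans_le hz.2.1))).not_ge hz.2.2
  filter_upwards [hnear, hr, hfar] with t hnear hr hfar h0 z hz
  by_contra! hre
  have hzδ : ‖z‖ < δ := lt_of_not_ge fun h =>
    hfar z ⟨mem_closedBall_zero_iff.2 (hr z hz), h, hre⟩ hz
  exact hre.not_gt <| re_neg_of_isRoot_of_re_divDiff_pos h0 hz (hnear z 0 hzδ (by simpa))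
    (hnear z _ hzδ (by rwa [Complex.norm_conj]))

end ContinuousFamily

end Polynomial

namespace Matrix

variable {ι : Type*} [Fintype ι]

theorem continuous_charpoly_coeff [DecidableEq ι] {R : Type*} [CommRing R] [TopologicalSpace R]
    [IsTopologicalRing R] (k : ℕ) : Continuous fun M : Matrix ι ι R => M.charpoly.coeff k := by
  have h (M : Matrix ι ι R) : M.charpoly.coeff k =
      MvPolynomial.eval (fun ij : ι × ι => M ij.1 ij.2) ((charpoly.univ R ι).coeff k) := by
    rw [MvPolynomial.eval, charpoly.univ_coeff_eval₂Hom]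
    rfl
  simp only [h]
  exact (MvPolynomial.continuous_eval _).comp (by fun_prop)

theorem eval_zero_charpoly [DecidableEq ι] {R : Type*} [CommRing R] (M : Matrix ι ι R) :
    M.charpoly.eval 0 = (-M).det := by
  rw [eval_charpoly, map_zero, zero_sub]

theorem exists_mulVec_eq_smul_of_isRoot_charpoly [DecidableEq ι] (M : Matrix ι ι ℝ) {μ : ℂ}
    (h : (M.charpoly.map (algebraMap ℝ ℂ)).IsRoot μ) :
    ∃ v : ι → ℂ, v ≠ 0 ∧ M.map (algebraMap ℝ ℂ) *ᵥ v = μ • v := by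
  rw [← charpoly_map, IsRoot, eval_charpoly] at h
  obtain ⟨v, hv, hMv⟩ := exists_mulVec_eq_zero_iff.2 h
  refine ⟨v, hv, ?_⟩
  have hscalar : scalar ι μ *ᵥ v = μ • v := by
    ext i
    simp [mulVec_diagonal]
  rw [sub_mulVec, hscalar, sub_eq_zero] at hMv
  exact hMv.symm

theorem re_star_dotProduct_map_mulVec (M : Matrix ι ι ℝ) (v : ι → ℂ) :
    (star v ⬝ᵥ M.map (algebraMap ℝ ℂ) *ᵥ v).re =
      (fun i => (v i).re) ⬝ᵥ M *ᵥ (fun i => (v i).re) +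
        (fun i => (v i).im) ⬝ᵥ M *ᵥ (fun i => (v i).im) := by
  simp only [dotProduct, mulVec, Pi.star_apply, Matrix.map_apply, Finset.mul_sum,
    ← Finset.sum_add_distrib, Complex.re_sum]
  refine Finset.sum_congr rfl fun i _ => Finset.sum_congr rfl fun j _ => ?_
  simp [Complex.mul_re, Complex.mul_im]

theorem dotProduct_mulVec_le (A : Matrix ι ι ℝ) (x : ι → ℝ) :
    x ⬝ᵥ A *ᵥ x ≤ (∑ i, ∑ j, |A i j|) * ‖x‖ ^ 2 := by
  calc x ⬝ᵥ A *ᵥ x = ∑ i, ∑ j, x i * A i j * x j := by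
        simp [dotProduct, mulVec, Finset.mul_sum, mul_assoc]
    _ ≤ ∑ i, ∑ j, |A i j| * ‖x‖ ^ 2 := by
        refine Finset.sum_le_sum fun i _ => Finset.sum_le_sum fun j _ => ?_
        have hi : |x i| ≤ ‖x‖ := norm_le_pi_norm x i
        have hj : |x j| ≤ ‖x‖ := norm_le_pi_norm x j
        calc x i * A i j * x j ≤ |A i j| * (|x i| * |x j|) :=
              (le_abs_self _).trans_eq (by simp only [abs_mul]; ring)
          _ ≤ |A i j| * ‖x‖ ^ 2 := by
              rw [sq]
              exact mul_le_mul_of_nonneg_left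
                (mul_le_mul hi hj (abs_nonneg _) (norm_nonneg _)) (abs_nonneg _)
    _ = (∑ i, ∑ j, |A i j|) * ‖x‖ ^ 2 := by simp only [Finset.sum_mul]

theorem exists_dotProduct_mulVec_le_neg_mul_sq_norm (S : Matrix ι ι ℝ)
    (hS : ∀ x ≠ 0, x ⬝ᵥ S *ᵥ x < 0) : ∃ c > 0, ∀ x, x ⬝ᵥ S *ᵥ x ≤ -c * ‖x‖ ^ 2 := by
  have hhom (r : ℝ) (x : ι → ℝ) : (r • x) ⬝ᵥ S *ᵥ (r • x) = r ^ 2 * (x ⬝ᵥ S *ᵥ x) := by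
    simp only [mulVec_smul, smul_dotProduct, dotProduct_smul, smul_eq_mul]
    ring
  have hunit (x : ι → ℝ) (hx : x ≠ 0) : ‖x‖⁻¹ • x ∈ Metric.sphere 0 1 :=
    mem_sphere_zero_iff_norm.2 (norm_smul_inv_norm hx)
  rcases (Metric.sphere (0 : ι → ℝ) 1).eq_empty_or_nonempty with hempty | hne
  · refine ⟨1, one_pos, fun x => ?_⟩
    obtain rfl : x = 0 := by_contra fun hx => hempty.subset (hunit x hx)
    simp
  obtain ⟨u, hu, hmax⟩ := (isCompact_sphere (0 : ι → ℝ) 1).exists_isMaxOn hne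
    (Continuous.continuousOn (by fun_prop) (f := fun x => x ⬝ᵥ S *ᵥ x))
  have hu0 : u ≠ 0 := by
    rintro rfl
    simp at hu
  refine ⟨-(u ⬝ᵥ S *ᵥ u), neg_pos.2 (hS u hu0), fun x => ?_⟩
  rcases eq_or_ne x 0 with rfl | hx
  · simp
  calc x ⬝ᵥ S *ᵥ x = ‖x‖ ^ 2 * ((‖x‖⁻¹ • x) ⬝ᵥ S *ᵥ (‖x‖⁻¹ • x)) := by
        rw [← hhom, smul_smul, mul_inv_cancel₀ (norm_ne_zero_iff.2 hx), one_smul]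
    _ ≤ ‖x‖ ^ 2 * (u ⬝ᵥ S *ᵥ u) := mul_le_mul_of_nonneg_left (hmax (hunit x hx)) (sq_nonneg _)
    _ = -(-(u ⬝ᵥ S *ᵥ u)) * ‖x‖ ^ 2 := by ring

end Matrix

open scoped ComplexOrder in
theorem allEigNegRe_of_dotProduct_mulVec_neg {n : ℕ} (M : Matrix (Fin n) (Fin n) ℝ)
    (hM : ∀ x ≠ 0, x ⬝ᵥ M *ᵥ x < 0) : AllEigNegRe M := by
  intro μ hμ
  obtain ⟨v, hv, hMv⟩ := M.exists_mulVec_eq_smul_of_isRoot_charpoly hμ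
  have hle (x : Fin n → ℝ) : x ⬝ᵥ M *ᵥ x ≤ 0 := by
    rcases eq_or_ne x 0 with rfl | hx
    · simp
    · exact (hM x hx).le
  have hquad : (star v ⬝ᵥ M.map (algebraMap ℝ ℂ) *ᵥ v).re < 0 := by
    rw [re_star_dotProduct_map_mulVec]
    have hre_or_im : (fun i => (v i).re) ≠ 0 ∨ (fun i => (v i).im) ≠ 0 := by
      by_contra! h0
      exact hv (funext fun i => Complex.ext (congrFun h0.1 i) (congrFun h0.2 i))
    rcases hre_or_im with h | h
    · exact add_neg_of_neg_of_nonpos (hM _ h) (hle _)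
    · exact add_neg_of_nonpos_of_neg (hle _) (hM _ h)
  obtain ⟨hpos, him⟩ := Complex.lt_def.1 (dotProduct_star_self_pos_iff.2 hv)
  rw [hMv, dotProduct_smul, smul_eq_mul, Complex.mul_re, ← him] at hquad
  simp only [Complex.zero_re, Complex.zero_im, mul_zero, sub_zero] at hpos hquad
  nlinarith

theorem someEigPosRe_of_det_neg_neg {n : ℕ} {M : Matrix (Fin n) (Fin n) ℝ}
    (h : (-M).det < 0) : SomeEigPosRe M := by
  obtain ⟨t, ht, hroot⟩ :=
    M.charpoly_monic.exists_pos_isRoot_of_eval_zero_neg (by rwa [eval_zero_charpoly])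
  exact ⟨algebraMap ℝ ℂ t, hroot.map, by simpa using ht⟩

theorem eventually_allEigNegRe_atTop {n : ℕ} (A J2 J4 : Matrix (Fin n) (Fin n) ℝ)
    (hJ4 : ∀ x, x ⬝ᵥ J4 *ᵥ x ≤ 0) {κbar : ℝ}
    (hκbar : ∀ x ≠ 0, x ⬝ᵥ (J2 + κbar ^ 2 • J4) *ᵥ x < 0) :
    ∀ᶠ κ : ℝ in atTop, AllEigNegRe (A + κ ^ 2 • J2 + κ ^ 4 • J4) := by
  obtain ⟨c, hc, hS⟩ := (J2 + κbar ^ 2 • J4).exists_dotProduct_mulVec_le_neg_mul_sq_norm hκbar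
  set a := ∑ i, ∑ j, |A i j|
  have hlarge : ∀ᶠ κ : ℝ in atTop, κbar ^ 2 ≤ κ ^ 2 ∧ a / c < κ ^ 2 :=
    (tendsto_pow_atTop two_ne_zero).eventually
      ((eventually_ge_atTop (κbar ^ 2)).and (eventually_gt_atTop (a / c)))
  filter_upwards [hlarge] with κ ⟨hκbar_le, ha⟩
  rw [div_lt_iff₀ hc] at ha
  refine allEigNegRe_of_dotProduct_mulVec_neg _ fun x hx => ?_
  have hsplit : x ⬝ᵥ (A + κ ^ 2 • J2 + κ ^ 4 • J4) *ᵥ x = x ⬝ᵥ A *ᵥ x +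
      κ ^ 2 * (x ⬝ᵥ (J2 + κbar ^ 2 • J4) *ᵥ x) +
        κ ^ 2 * (κ ^ 2 - κbar ^ 2) * (x ⬝ᵥ J4 *ᵥ x) := by
    simp only [add_mulVec, smul_mulVec, dotProduct_add, dotProduct_smul, smul_eq_mul]
    ring
  have hJ4term := mul_nonpos_of_nonneg_of_nonpos
    (mul_nonneg (sq_nonneg κ) (sub_nonneg.2 hκbar_le)) (hJ4 x)
  rw [hsplit]
  nlinarith [A.dotProduct_mulVec_le x, mul_le_mul_of_nonneg_left (hS x) (sq_nonneg κ),
    mul_pos (sub_pos.2 ha) (pow_pos (norm_pos_iff.2 hx) 2)]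

theorem stmt10_general (n m : ℕ) (B : Matrix (Fin n) (Fin m) ℝ) (C : Matrix (Fin m) (Fin n) ℝ)
    (Δlo Δhi : Fin m → ℝ)
    (J2 J4 : Matrix (Fin n) (Fin n) ℝ)
    (hJ4nsd : ∀ x : Fin n → ℝ, x ⬝ᵥ J4.mulVec x ≤ 0)
    (hκbar : ∃ κbar : ℝ, 0 < κbar ∧
      ∀ x : Fin n → ℝ, x ≠ 0 → x ⬝ᵥ (J2 + κbar ^ 2 • J4).mulVec x < 0)
    (hspec : ∀ Δ : Fin m → ℝ, (∀ j, Δlo j ≤ Δ j ∧ Δ j ≤ Δhi j) →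
      (((B * Matrix.diagonal Δ * C).charpoly).map (algebraMap ℝ ℂ)).rootMultiplicity 0 = 1 ∧
      (∀ z : ℂ, (((B * Matrix.diagonal Δ * C).charpoly).map (algebraMap ℝ ℂ)).IsRoot z →
        z ≠ 0 → z.re < 0))
    (hPsiMinusInitPos : ∃ κhat : ℝ, 0 < κhat ∧ ∀ κ : ℝ, 0 < κ → κ < κhat →
      ∀ Δ : Fin m → ℝ, (∀ j, Δlo j ≤ Δ j ∧ Δ j ≤ Δhi j) →
        0 < (-(Jmat B C J2 J4 Δ κ)).det)
    (hPsiMinusNeg : ∃ κstar : ℝ, 0 < κstar ∧ ∃ Δstar : Fin m → ℝ,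
      (∀ j, Δlo j ≤ Δstar j ∧ Δstar j ≤ Δhi j) ∧
        (-(Jmat B C J2 J4 Δstar κstar)).det < 0) :
    ∃ Δ : Fin m → ℝ, (∀ j, Δlo j ≤ Δ j ∧ Δ j ≤ Δhi j) ∧ Microphase B C J2 J4 Δ := by
  obtain ⟨κstar, hκstar, Δstar, hΔstar, hdet_neg⟩ := hPsiMinusNeg
  obtain ⟨κhat, hκhat, hdet_pos⟩ := hPsiMinusInitPos
  obtain ⟨hmult, hroots⟩ := hspec Δstar hΔstar
  obtain ⟨κbar, -, hdef⟩ := hκbar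
  set J := Jmat B C J2 J4 Δstar
  have hJ0 : J 0 = B * diagonal Δstar * C := by simp [J, Jmat]
  have hsmall : ∀ᶠ κ in 𝓝[>] 0, AllEigNegRe (J κ) := by
    have hpert := eventually_forall_isRoot_re_neg (p := fun κ => (J κ).charpoly) (t₀ := 0)
      (fun _ => charpoly_monic _)
      (fun _ => ((charpoly_natDegree_eq_dim _).trans (Fintype.card_fin n)).le)
      (fun k => (continuous_charpoly_coeff k).comp (by unfold J Jmat; fun_prop))
      (by rwa [hJ0]) (by rw [hJ0]; exact (charpoly_monic _).eval_derivative_zero_pos hmult hroots)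
    filter_upwards [nhdsWithin_le_nhds hpert, Ioo_mem_nhdsGT hκhat] with κ hκ hκ'
    exact hκ (by rw [eval_zero_charpoly]; exact hdet_pos κ hκ'.1 hκ'.2 Δstar hΔstar)
  obtain ⟨u, hu, hsub⟩ := mem_nhdsGT_iff_exists_Ioo_subset.1 hsmall
  obtain ⟨κ2, hκ2, hκ2_gt⟩ := ((eventually_allEigNegRe_atTop _ J2 J4 hJ4nsd hdef).and
    (eventually_gt_atTop κstar)).exists
  exact ⟨Δstar, hΔstar, min u (κstar / 2), κstar, κ2, lt_min hu (half_pos hκstar),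
    (min_le_right _ _).trans_lt (half_lt_self hκstar), hκ2_gt,
    fun κ h0 h1 => hsub ⟨h0, h1.trans_le (min_le_left _ _)⟩,
    someEigPosRe_of_det_neg_neg hdet_neg, hκ2⟩

/-- (Theorem 2, sufficient condition, `Ψ⁻` branch) Under the structural assumptions on
`J₂, J₄` and on the spectrum of `B ⬝ diag(Δ) ⬝ C` for all `Δ ∈ 𝒟`, if
`Ψ⁻(κ) = min_{Δ ∈ 𝒟} det (-J(Δ,κ))` is initially positive and has a negative sign
change, then some `Δ ∈ 𝒟` exhibits microphase separation. -/
theorem stmt10 (n m : ℕ) (B : Matrix (Fin n) (Fin m) ℝ) (C : Matrix (Fin m) (Fin n) ℝ)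
    (Δlo Δhi : Fin m → ℝ) (hbounds : ∀ j, 0 ≤ Δlo j ∧ Δlo j ≤ Δhi j)
    (J2 J4 : Matrix (Fin n) (Fin n) ℝ) (hJ2 : J2.IsSymm) (hJ4 : J4.IsSymm)
    (hJ4nsd : ∀ x : Fin n → ℝ, x ⬝ᵥ J4.mulVec x ≤ 0)
    (hκbar : ∃ κbar : ℝ, 0 < κbar ∧
      ∀ x : Fin n → ℝ, x ≠ 0 → x ⬝ᵥ (J2 + κbar ^ 2 • J4).mulVec x < 0)
    (hspec : ∀ Δ : Fin m → ℝ, (∀ j, Δlo j ≤ Δ j ∧ Δ j ≤ Δhi j) →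
      (((B * Matrix.diagonal Δ * C).charpoly).map (algebraMap ℝ ℂ)).rootMultiplicity 0 = 1 ∧
      (∀ z : ℂ, (((B * Matrix.diagonal Δ * C).charpoly).map (algebraMap ℝ ℂ)).IsRoot z →
        z ≠ 0 → z.re < 0))
    (hPsiMinusInitPos : ∃ κhat : ℝ, 0 < κhat ∧ ∀ κ : ℝ, 0 < κ → κ < κhat →
      ∀ Δ : Fin m → ℝ, (∀ j, Δlo j ≤ Δ j ∧ Δ j ≤ Δhi j) →
        0 < (-(Jmat B C J2 J4 Δ κ)).det)
    (hPsiMinusNeg : ∃ κstar : ℝ, 0 < κstar ∧ ∃ Δstar : Fin m → ℝ,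
      (∀ j, Δlo j ≤ Δstar j ∧ Δstar j ≤ Δhi j) ∧
        (-(Jmat B C J2 J4 Δstar κstar)).det < 0) :
    ∃ Δ : Fin m → ℝ, (∀ j, Δlo j ≤ Δ j ∧ Δ j ≤ Δhi j) ∧ Microphase B C J2 J4 Δ :=
  stmt10_general n m B C Δlo Δhi J2 J4 hJ4nsd hκbar hspec hPsiMinusInitPos hPsiMinusNeg
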